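/- arXiv:1807.04913 — 3 statements merged into one kernel-verified Lean document; each statement's English description precedes it below -/
import Mathlib

section
/- Let M := !![0, 1; 3, 3] and U := !![1, 1; 1, 1] in Matrix (Fin 2) (Fin 2) (ZMod 4), let W' be the (ZMod 4)-submodule underlying Algebra.adjoin (ZMod 4) {M}, and let UW' be the image of W' under the (ZMod 4)-linear map of left multiplication by U (i.e. Submodule.map (LinearMap.mulLeft (ZMod 4) U) W'). Then W' ⊓ UW' = ⊥ and W' ⊔ UW' = ⊤, i.e. W ∩ UW = {0} and W + UW = M₂(ℤ₄). -/
open Matrix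

abbrev Mm : Matrix (Fin 2) (Fin 2) (ZMod 4) := !![0, 1; 3, 3]
abbrev Um : Matrix (Fin 2) (Fin 2) (ZMod 4) := !![1, 1; 1, 1]

lemma hM2 : Mm * Mm = 3 • Mm + 3 • (1 : Matrix (Fin 2) (Fin 2) (ZMod 4)) := by decide

lemma adjoin_eq_span :
    Subalgebra.toSubmodule (Algebra.adjoin (ZMod 4) {Mm}) =
      Submodule.span (ZMod 4) {1, Mm} := by
  apply le_antisymm
  · intro x hx
    have hx' : x ∈ Algebra.adjoin (ZMod 4) {Mm} := hx
    clear hx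
    induction hx' using Algebra.adjoin_induction with
    | mem y hy =>
      rcases hy with rfl
      exact Submodule.subset_span (by simp)
    | algebraMap r =>
      have : (algebraMap (ZMod 4) (Matrix (Fin 2) (Fin 2) (ZMod 4))) r = r • 1 := by
        simp [Algebra.algebraMap_eq_smul_one]
      rw [this]
      exact Submodule.smul_mem _ _ (Submodule.subset_span (by simp))
    | add y z _ _ hy hz => exact Submodule.add_mem _ hy hz
    | mul y z _ _ hy hz =>
      rw [Submodule.mem_span_pair] at hy hz ⊢
      obtain ⟨a, b, rfl⟩ := hy
      obtain ⟨c, d, rfl⟩ := hz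
      refine ⟨a * c + 3 * b * d, a * d + b * c + 3 * b * d, ?_⟩
      have : (a • (1 : Matrix (Fin 2) (Fin 2) (ZMod 4)) + b • Mm) *
          (c • 1 + d • Mm) = (a * c) • 1 + (a * d + b * c) • Mm + (b * d) • (Mm * Mm) := by
        simp only [add_mul, mul_add, smul_mul_smul_comm, one_mul, mul_one, add_smul]
        abel
      rw [this, hM2]
      simp only [smul_add, smul_smul]
      module
  · rw [Submodule.span_le]
    rintro y (rfl | rfl)
    · exact Subalgebra.one_mem _
    · exact Algebra.subset_adjoin rfl

lemma key_inf : ∀ a b c d : ZMod 4,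
    a • (1 : Matrix (Fin 2) (Fin 2) (ZMod 4)) + b • Mm = c • Um + d • (Um * Mm) →
    c • Um + d • (Um * Mm) = 0 := by decide

lemma key_sup : ∀ p q r s : ZMod 4,
    (2*p+q+2*r+3*s) • (1 : Matrix (Fin 2) (Fin 2) (ZMod 4)) + (3*p+3*q+r+s) • Mm +
      ((p+2*q+3*r+3*s) • Um + (2*p+3*q+r+2*s) • (Um * Mm)) = !![p, q; r, s] := by decide

/-- With `W` the `ℤ₄`-submodule underlying `Algebra.adjoin (ZMod 4) {M}` and
`UW` its image under left multiplication by `U`, one has `W ∩ UW = {0}` and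
`W + UW = M₂(ℤ₄)`. -/
theorem stmt2 (M U : Matrix (Fin 2) (Fin 2) (ZMod 4))
    (hM : M = !![0, 1; 3, 3]) (hU : U = !![1, 1; 1, 1]) :
    Subalgebra.toSubmodule (Algebra.adjoin (ZMod 4) {M}) ⊓
      Submodule.map (LinearMap.mulLeft (ZMod 4) U)
        (Subalgebra.toSubmodule (Algebra.adjoin (ZMod 4) {M})) = ⊥ ∧
    Subalgebra.toSubmodule (Algebra.adjoin (ZMod 4) {M}) ⊔
      Submodule.map (LinearMap.mulLeft (ZMod 4) U)
        (Subalgebra.toSubmodule (Algebra.adjoin (ZMod 4) {M})) = ⊤ := by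
  subst hM hU
  rw [show (!![0,1;3,3] : Matrix (Fin 2) (Fin 2) (ZMod 4)) = Mm from rfl,
    show (!![1,1;1,1] : Matrix (Fin 2) (Fin 2) (ZMod 4)) = Um from rfl, adjoin_eq_span]
  have hmap : Submodule.map (LinearMap.mulLeft (ZMod 4) Um)
      (Submodule.span (ZMod 4) {1, Mm}) =
      Submodule.span (ZMod 4) {Um, Um * Mm} := by
    rw [Submodule.map_span, Set.image_pair]
    congr 1
    simp [LinearMap.mulLeft_apply]
  rw [hmap]
  constructor
  · rw [eq_bot_iff]
    intro x hx
    rw [Submodule.mem_inf] at hx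
    obtain ⟨h1, h2⟩ := hx
    rw [Submodule.mem_span_pair] at h1 h2
    obtain ⟨a, b, hab⟩ := h1
    obtain ⟨c, d, hcd⟩ := h2
    rw [← hcd] at hab
    rw [Submodule.mem_bot, ← hcd]
    exact key_inf a b c d hab
  · rw [eq_top_iff]
    intro x _
    rw [Submodule.mem_sup]
    refine ⟨(2*(x 0 0)+(x 0 1)+2*(x 1 0)+3*(x 1 1)) • 1 +
        (3*(x 0 0)+3*(x 0 1)+(x 1 0)+(x 1 1)) • Mm,
      Submodule.mem_span_pair.2 ⟨_, _, rfl⟩,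
      ((x 0 0)+2*(x 0 1)+3*(x 1 0)+3*(x 1 1)) • Um +
        (2*(x 0 0)+3*(x 0 1)+(x 1 0)+2*(x 1 1)) • (Um * Mm),
      Submodule.mem_span_pair.2 ⟨_, _, rfl⟩, ?_⟩
    conv_rhs => rw [Matrix.eta_fin_two x]
    exact key_sup (x 0 0) (x 0 1) (x 1 0) (x 1 1)
end

section
/- Let M := !![0, 1; 3, 3] and U := !![1, 1; 1, 1] in Matrix (Fin 2) (Fin 2) (ZMod 4), and let W := Algebra.adjoin (ZMod 4) {M}. Then the map from W × W to Matrix (Fin 2) (Fin 2) (ZMod 4) sending (p, q) to ↑p + U * ↑q is bijective; that is, every 2×2 matrix over ℤ₄ can be written uniquely in the form p + U·q with p, q ∈ W. (This is the decomposition M₂(ℤ₄) ≅ ℤ₄[w] + U·ℤ₄[w].) -/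
open Matrix

/-- Any element of `Algebra.adjoin (ZMod 4) {M}` with `M = !![0,1;3,3]` has the
shape `!![x, y; 3y, x+3y]`. -/
lemma stmt3_struct (M : Matrix (Fin 2) (Fin 2) (ZMod 4)) (hM : M = !![0, 1; 3, 3])
    (p : Matrix (Fin 2) (Fin 2) (ZMod 4)) (hp : p ∈ Algebra.adjoin (ZMod 4) {M}) :
    p 1 0 = 3 * p 0 1 ∧ p 1 1 = p 0 0 + 3 * p 0 1 := by
  induction hp using Algebra.adjoin_induction with
  | mem x hx =>
      simp only [Set.mem_singleton_iff] at hx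
      subst hx hM
      constructor <;> decide
  | algebraMap r =>
      simp [Matrix.algebraMap_matrix_apply]
  | add x y hx hy ihx ihy =>
      simp only [Matrix.add_apply]
      exact ⟨by rw [ihx.1, ihy.1]; ring, by rw [ihx.2, ihy.2]; ring⟩
  | mul x y hx hy ihx ihy =>
      obtain ⟨h1, h2⟩ := ihx
      obtain ⟨g1, g2⟩ := ihy
      simp only [Matrix.mul_apply, Fin.sum_univ_two]
      rw [h1, h2, g1, g2]
      constructor <;> ring_nf

lemma stmt3_surj_key : ∀ a b c d : ZMod 4,
    (2*a+b+2*c+3*d) • (1 : Matrix (Fin 2) (Fin 2) (ZMod 4)) + (3*a+3*b+c+d) • !![0,1;3,3]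
      + !![1,1;1,1] * ((a+2*b+3*c+3*d) • (1 : Matrix (Fin 2) (Fin 2) (ZMod 4))
          + (2*a+3*b+c+2*d) • !![0,1;3,3]) = !![a,b;c,d] := by decide

/-- Every matrix in `M₂(ℤ₄)` is uniquely of the form `p + U * q` with
`p, q ∈ W = Algebra.adjoin (ZMod 4) {M}`: the map `(p, q) ↦ p + U * q` is
bijective. -/
theorem stmt3 (M U : Matrix (Fin 2) (Fin 2) (ZMod 4))
    (hM : M = !![0, 1; 3, 3]) (hU : U = !![1, 1; 1, 1]) :
    Function.Bijective
      (fun pq : Algebra.adjoin (ZMod 4) {M} × Algebra.adjoin (ZMod 4) {M} =>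
        ((pq.1 : Matrix (Fin 2) (Fin 2) (ZMod 4)) +
          U * (pq.2 : Matrix (Fin 2) (Fin 2) (ZMod 4)))) := by
  have hMmem : M ∈ Algebra.adjoin (ZMod 4) {M} :=
    Algebra.subset_adjoin (Set.mem_singleton M)
  have h4 : (4 : ZMod 4) = 0 := by decide
  constructor
  · rintro ⟨⟨p1, hp1⟩, ⟨q1, hq1⟩⟩ ⟨⟨p2, hp2⟩, ⟨q2, hq2⟩⟩ h
    simp only at h
    simp only [Prod.mk.injEq, Subtype.mk.injEq]
    obtain ⟨P1, P2⟩ := stmt3_struct M hM p1 hp1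
    obtain ⟨Q1, Q2⟩ := stmt3_struct M hM q1 hq1
    obtain ⟨R1, R2⟩ := stmt3_struct M hM p2 hp2
    obtain ⟨S1, S2⟩ := stmt3_struct M hM q2 hq2
    subst hU
    have e00 := congrFun (congrFun h 0) 0
    have e01 := congrFun (congrFun h 0) 1
    have e10 := congrFun (congrFun h 1) 0
    have e11 := congrFun (congrFun h 1) 1
    simp only [Matrix.add_apply, Matrix.mul_apply, Fin.sum_univ_two, Matrix.of_apply,
      Matrix.cons_val', Matrix.cons_val_zero, Matrix.cons_val_one, Matrix.head_cons,
      Matrix.empty_val', Matrix.cons_val_fin_one, Matrix.head_fin_const,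
      one_mul] at e00 e01 e10 e11
    simp only [P1, P2, Q1, Q2, R1, R2, S1, S2] at e00 e01 e10 e11
    have k1 : p1 0 0 = p2 0 0 := by
      linear_combination 2*e00 + e01 + 2*e10 + 3*e11
        - ((p1 0 0 - p2 0 0) + 4*(p1 0 1 - p2 0 1) + 2*(q1 0 0 - q2 0 0)
            + 7*(q1 0 1 - q2 0 1)) * h4
    have k2 : p1 0 1 = p2 0 1 := by
      linear_combination 3*e00 + 3*e01 + e10 + e11
        - ((p1 0 0 - p2 0 0) + 2*(p1 0 1 - p2 0 1) + 2*(q1 0 0 - q2 0 0)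
            + 7*(q1 0 1 - q2 0 1)) * h4
    have k3 : q1 0 0 = q2 0 0 := by
      linear_combination e00 + 2*e01 + 3*e10 + 3*e11
        - ((p1 0 0 - p2 0 0) + 5*(p1 0 1 - p2 0 1) + 2*(q1 0 0 - q2 0 0)
            + 8*(q1 0 1 - q2 0 1)) * h4
    have k4 : q1 0 1 = q2 0 1 := by
      linear_combination 2*e00 + 3*e01 + e10 + 2*e11
        - ((p1 0 0 - p2 0 0) + 3*(p1 0 1 - p2 0 1) + 2*(q1 0 0 - q2 0 0)
            + 7*(q1 0 1 - q2 0 1)) * h4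
    constructor
    · rw [Matrix.eta_fin_two p1, Matrix.eta_fin_two p2, P1, P2, R1, R2, k1, k2]
    · rw [Matrix.eta_fin_two q1, Matrix.eta_fin_two q2, Q1, Q2, S1, S2, k3, k4]
  · intro X
    refine ⟨⟨⟨(2*X 0 0+X 0 1+2*X 1 0+3*X 1 1) • 1 + (3*X 0 0+3*X 0 1+X 1 0+X 1 1) • M, ?_⟩,
             ⟨(X 0 0+2*X 0 1+3*X 1 0+3*X 1 1) • 1 + (2*X 0 0+3*X 0 1+X 1 0+2*X 1 1) • M, ?_⟩⟩,
           ?_⟩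
    · exact add_mem (SMulMemClass.smul_mem _ (one_mem _)) (SMulMemClass.smul_mem _ hMmem)
    · exact add_mem (SMulMemClass.smul_mem _ (one_mem _)) (SMulMemClass.smul_mem _ hMmem)
    · simp only
      subst hM hU
      exact (stmt3_surj_key (X 0 0) (X 0 1) (X 1 0) (X 1 1)).trans
        (Matrix.eta_fin_two X).symm
end

section
/- Let S := AdjoinRoot (X^2 + X + 1 : Polynomial (ZMod 4)), let M := !![0, 1; 3, 3] and U := !![1, 1; 1, 1] in Matrix (Fin 2) (Fin 2) (ZMod 4), and let ι : S →ₐ[ZMod 4] Matrix (Fin 2) (Fin 2) (ZMod 4) be the algebra homomorphism sending the adjoined root to M. Fix n : ℕ with 0 < n, and let τ denote the cyclic shift on vectors of length n (τ(c)ᵢ = c_{i-1}, indices mod n). Let C₁ and C₂ be S-submodules of (Fin n → S), and define C := { y : Fin n → Matrix (Fin 2) (Fin 2) (ZMod 4) | ∃ c₁ ∈ C₁, ∃ c₂ ∈ C₂, y = fun i => ι (c₁ i) + U * ι (c₂ i) }. Then C is closed under the cyclic shift τ if and only if both C₁ and C₂ are closed under the cyclic shift τ. (A linear code C = C₁ +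 U·C₂ over M₂(ℤ₄) is cyclic if and only if C₁ and C₂ are cyclic codes over ℤ₄[w].) -/
/-!
The map `(c₁, c₂) ↦ ι ∘ c₁ + U * ι ∘ c₂` is injective, because `ι` is injective and its image
`{a + b M}` meets `U · ι(S)` only in `0` (a finite check in `M₂(ℤ₄)`: every matrix in `U · M₂(ℤ₄)`
has equal rows). It commutes with the cyclic shift, so a shifted codeword of `C` decomposes
uniquely, and its components are the shifted components.
-/

open Polynomial Matrix

theorem AdjoinRoot.exists_eq_algebraMap_add_algebraMap_mul_root {R : Type*} [CommRing R]
    {g : R[X]} (hg : g.Monic) (hdeg : g.natDegree = 2) (s : AdjoinRoot g) :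
    ∃ a b : R, s = algebraMap R _ a + algebraMap R _ b * root g := by
  induction s using AdjoinRoot.induction_on with | ih p =>
  have hg1 : g ≠ 1 := fun h => by simp [h] at hdeg
  have hlin : (p %ₘ g).natDegree ≤ 1 := by
    have := natDegree_modByMonic_lt p hg hg1
    omega
  obtain ⟨b, a, hab⟩ := exists_eq_X_add_C_of_natDegree_le_one hlin
  refine ⟨a, b, ?_⟩
  rw [← mk_leftInverse hg (mk g p), modByMonicHom_mk, hab]
  simp [algebraMap_eq, add_comm]

section IndependentSum

variable {S A κ : Type*} [AddCommGroup S] [AddCommGroup A] {φ ψ : S →+ A}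

theorem eq_and_eq_of_add_eq_add (hind : ∀ s t, φ s = ψ t → s = 0 ∧ t = 0) {a a' b b' : S}
    (h : φ a + ψ b = φ a' + ψ b') : a = a' ∧ b = b' := by
  obtain ⟨ha, hb⟩ := hind (a - a') (b' - b) <| by
    rw [map_sub, map_sub, sub_eq_sub_iff_add_eq_add, h, add_comm]
  exact ⟨sub_eq_zero.1 ha, (sub_eq_zero.1 hb).symm⟩

variable (φ ψ) in
def sumCode (C₁ C₂ : AddSubgroup (κ → S)) : Set (κ → A) :=
  {y | ∃ c₁ ∈ C₁, ∃ c₂ ∈ C₂, y = fun i => φ (c₁ i) + ψ (c₂ i)}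

theorem forall_reindex_mem_sumCode_iff (hind : ∀ s t, φ s = ψ t → s = 0 ∧ t = 0)
    (σ : κ → κ) (C₁ C₂ : AddSubgroup (κ → S)) :
    (∀ y ∈ sumCode φ ψ C₁ C₂, (fun i => y (σ i)) ∈ sumCode φ ψ C₁ C₂) ↔
      (∀ c ∈ C₁, (fun i => c (σ i)) ∈ C₁) ∧ (∀ c ∈ C₂, (fun i => c (σ i)) ∈ C₂) := by
  constructor
  · intro h
    have hshift : ∀ c ∈ C₁, ∀ d ∈ C₂, (fun i => c (σ i)) ∈ C₁ ∧ (fun i => d (σ i)) ∈ C₂ := by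
      intro c hc d hd
      obtain ⟨c₁, hc₁, c₂, hc₂, heq⟩ := h _ ⟨c, hc, d, hd, rfl⟩
      have hcomp i := eq_and_eq_of_add_eq_add hind (congrFun heq i)
      have hc : (fun i => c (σ i)) = c₁ := funext fun i => (hcomp i).1
      have hd : (fun i => d (σ i)) = c₂ := funext fun i => (hcomp i).2
      exact ⟨hc ▸ hc₁, hd ▸ hc₂⟩
    exact ⟨fun c hc => (hshift c hc 0 C₂.zero_mem).1, fun d hd => (hshift 0 C₁.zero_mem d hd).2⟩
  · rintro ⟨h₁, h₂⟩ y ⟨c₁, hc₁, c₂, hc₂, rfl⟩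
    exact ⟨_, h₁ c₁ hc₁, _, h₂ c₂ hc₂, rfl⟩

end IndependentSum

theorem ZMod4.smul_one_add_smul_eq_mul_smul_one_add_smul : ∀ a b p q : ZMod 4,
    a • (1 : Matrix (Fin 2) (Fin 2) (ZMod 4)) + b • !![0, 1; 3, 3] =
      !![1, 1; 1, 1] * (p • 1 + q • !![0, 1; 3, 3]) →
    a = 0 ∧ b = 0 ∧ p = 0 ∧ q = 0 := by
  decide

theorem eq_zero_of_apply_eq_mul_apply
    (ι : AdjoinRoot (X ^ 2 + X + 1 : (ZMod 4)[X]) →ₐ[ZMod 4] Matrix (Fin 2) (Fin 2) (ZMod 4))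
    (hι : ι (AdjoinRoot.root (X ^ 2 + X + 1 : (ZMod 4)[X])) = !![0, 1; 3, 3])
    (s t : AdjoinRoot (X ^ 2 + X + 1 : (ZMod 4)[X]))
    (h : ι s = !![1, 1; 1, 1] * ι t) : s = 0 ∧ t = 0 := by
  have hg : (X ^ 2 + X + 1 : (ZMod 4)[X]).Monic := by monicity!
  have hdeg : (X ^ 2 + X + 1 : (ZMod 4)[X]).natDegree = 2 := by compute_degree!
  have hι_lin (a b : ZMod 4) :
      ι (algebraMap _ _ a + algebraMap _ _ b * AdjoinRoot.root _) =
        a • 1 + b • !![0, 1; 3, 3] := by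
    rw [map_add, map_mul, AlgHom.commutes, AlgHom.commutes, hι,
      Algebra.algebraMap_eq_smul_one, ← Algebra.smul_def]
  obtain ⟨a, b, rfl⟩ := AdjoinRoot.exists_eq_algebraMap_add_algebraMap_mul_root hg hdeg s
  obtain ⟨p, q, rfl⟩ := AdjoinRoot.exists_eq_algebraMap_add_algebraMap_mul_root hg hdeg t
  rw [hι_lin, hι_lin] at h
  obtain ⟨rfl, rfl, rfl, rfl⟩ := ZMod4.smul_one_add_smul_eq_mul_smul_one_add_smul a b p q h
  simp

/-- A linear code `C = C₁ + U·C₂` of length `n` over `M₂(ℤ₄)` is cyclic (closed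
under the cyclic shift) iff `C₁` and `C₂` are cyclic codes over `ℤ₄[w]`. -/
theorem stmt5 (M U : Matrix (Fin 2) (Fin 2) (ZMod 4))
    (hM : M = !![0, 1; 3, 3]) (hU : U = !![1, 1; 1, 1])
    (ι : AdjoinRoot (X ^ 2 + X + 1 : Polynomial (ZMod 4)) →ₐ[ZMod 4]
      Matrix (Fin 2) (Fin 2) (ZMod 4))
    (hι : ι (AdjoinRoot.root (X ^ 2 + X + 1 : Polynomial (ZMod 4))) = M)
    (n : ℕ) [NeZero n]
    (C₁ C₂ : Submodule (AdjoinRoot (X ^ 2 + X + 1 : Polynomial (ZMod 4)))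
      (Fin n → AdjoinRoot (X ^ 2 + X + 1 : Polynomial (ZMod 4))))
    (C : Set (Fin n → Matrix (Fin 2) (Fin 2) (ZMod 4)))
    (hC : C = { y | ∃ c₁ ∈ C₁, ∃ c₂ ∈ C₂, y = fun i => ι (c₁ i) + U * ι (c₂ i) }) :
    ((∀ y ∈ C, (fun i => y (i - 1)) ∈ C) ↔
      (∀ c ∈ C₁, (fun i => c (i - 1)) ∈ C₁) ∧
      (∀ c ∈ C₂, (fun i => c (i - 1)) ∈ C₂)) := by
  subst hC hM hU
  exact forall_reindex_mem_sumCode_iff (φ := ι.toAddMonoidHom)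
    (ψ := (AddMonoidHom.mulLeft !![1, 1; 1, 1]).comp ι.toAddMonoidHom)
    (fun s t h => eq_zero_of_apply_eq_mul_apply ι hι s t h) (· - 1)
    C₁.toAddSubgroup C₂.toAddSubgroup
end
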